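/- arXiv:2206.01077 — 5 statements merged into one kernel-verified Lean document; each statement's English description precedes it below -/
import Mathlib

section
/- Let t, O, k, k' be real numbers with t > 1, O > 0, k ≥ 0, and k' ≥ 0. Then ((t + 1)·O + (t + 1)·k) / ((t − 1/t)·O + t·k + 1 + 1/t + k') ≤ t/(t − 1). -/
/-- Budget inequality for the independent set analysis: a per-vertex budget of
`t/(t-1)` suffices. -/
theorem independent_set_budget_bound (t O k k' : ℝ)
    (ht : 1 < t) (hO : 0 < O) (hk : 0 ≤ k) (hk' : 0 ≤ k') :
    ((t + 1) * O + (t + 1) * k) / ((t - 1 / t) * O + t * k + 1 + 1 / t + k') ≤ t / (t - 1) := by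
  have ht0 : 0 < t := by linarith
  have h1 : 0 < 1 / t := by positivity
  have hden : 0 < (t - 1 / t) * O + t * k + 1 + 1 / t + k' := by
    have : 0 < t - 1 / t := by
      rw [sub_pos, div_lt_iff₀ ht0]; nlinarith
    positivity
  rw [div_le_div_iff₀ hden (by linarith)]
  have ht' : t * (1 / t) = 1 := mul_one_div_cancel (ne_of_gt ht0)
  nlinarith [mul_nonneg hk' (le_of_lt ht0), mul_pos hO ht0]
end

section
/- Let G be a finite simple graph and M a matching in G. Suppose pv is an edge of M, x is a neighbor of p that is not saturated by M, and y is a neighbor of v that is not saturated by M (possibly x = y). Then every vertex cover C of G satisfies |C| ≥ |M| + 1. -/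
open Classical in
private lemma cover_aux {V : Type*} (M : Finset (Sym2 V)) (C : Finset V)
    (hM_disj : ∀ e ∈ M, ∀ f ∈ M, e ≠ f → ∀ w : V, w ∈ e → w ∉ f)
    (φ : Sym2 V → V) (z : V)
    (h1 : ∀ e ∈ M, φ e ∈ e) (h2 : ∀ e ∈ M, φ e ∈ C)
    (hz : z ∈ C) (hzφ : ∀ e ∈ M, φ e ≠ z) :
    M.card + 1 ≤ C.card := by
  classical
  have hinj : Set.InjOn φ M := by
    intro e he f hf hef
    by_contra h
    exact hM_disj e he f hf h (φ e) (h1 e he) (hef ▸ h1 f hf)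
  have hcard : (M.image φ).card = M.card := Finset.card_image_of_injOn hinj
  have hznot : z ∉ M.image φ := by
    simp only [Finset.mem_image, not_exists]
    rintro e ⟨he, hφe⟩
    exact hzφ e he hφe
  have hsub : insert z (M.image φ) ⊆ C := by
    intro w hw
    rcases Finset.mem_insert.mp hw with rfl | hw
    · exact hz
    · obtain ⟨e, he, rfl⟩ := Finset.mem_image.mp hw
      exact h2 e he
  calc M.card + 1 = (insert z (M.image φ)).card := by
        rw [Finset.card_insert_of_notMem hznot, hcard]
    _ ≤ C.card := Finset.card_le_card hsub

/-- If both endpoints of a matched edge `pv` have neighbors unsaturated by the matching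
`M`, then any vertex cover has size at least `|M| + 1`. -/
theorem cover_card_ge_of_blocked_matched_edge {V : Type*} [Fintype V] (G : SimpleGraph V)
    (M : Finset (Sym2 V)) (p v x y : V)
    (hM_edges : ∀ e ∈ M, e ∈ G.edgeSet)
    (hM_disj : ∀ e ∈ M, ∀ f ∈ M, e ≠ f → ∀ w : V, w ∈ e → w ∉ f)
    (hpv : s(p, v) ∈ M)
    (hpx : G.Adj p x) (hx : ∀ e ∈ M, x ∉ e)
    (hvy : G.Adj v y) (hy : ∀ e ∈ M, y ∉ e)
    (C : Finset V) (hC : ∀ a b : V, G.Adj a b → a ∈ C ∨ b ∈ C) :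
    M.card + 1 ≤ C.card := by
  classical
  have hex : ∀ e ∈ M, ∃ w, w ∈ e ∧ w ∈ C := by
    intro e
    induction e using Sym2.ind with
    | _ a b =>
      intro he
      have hadj : G.Adj a b := G.mem_edgeSet.mp (hM_edges _ he)
      rcases hC a b hadj with h | h
      · exact ⟨a, Sym2.mem_mk_left a b, h⟩
      · exact ⟨b, Sym2.mem_mk_right a b, h⟩
  set φ0 : Sym2 V → V := fun e =>
    if he : ∃ w, w ∈ e ∧ w ∈ C then he.choose else p with hφ0
  have hφ0mem : ∀ e ∈ M, φ0 e ∈ e ∧ φ0 e ∈ C := by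
    intro e he
    have h := hex e he
    simp only [hφ0, dif_pos h]
    exact h.choose_spec
  by_cases hxC : x ∈ C
  · exact cover_aux M C hM_disj φ0 x (fun e he => (hφ0mem e he).1)
      (fun e he => (hφ0mem e he).2) hxC
      (fun e he h => hx e he (h ▸ (hφ0mem e he).1))
  · by_cases hyC : y ∈ C
    · exact cover_aux M C hM_disj φ0 y (fun e he => (hφ0mem e he).1)
        (fun e he => (hφ0mem e he).2) hyC
        (fun e he h => hy e he (h ▸ (hφ0mem e he).1))
    · have hpC : p ∈ C := (hC p x hpx).resolve_right hxC
      have hvC : v ∈ C := (hC v y hvy).resolve_right hyC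
      have hpvne : p ≠ v := (G.mem_edgeSet.mp (hM_edges _ hpv)).ne
      set φ : Sym2 V → V := fun e => if e = s(p, v) then p else φ0 e with hφ
      refine cover_aux M C hM_disj φ v ?_ ?_ hvC ?_
      · intro e he
        simp only [hφ]
        split
        · next h => subst h; exact Sym2.mem_mk_left p v
        · exact (hφ0mem e he).1
      · intro e he
        simp only [hφ]
        split
        · exact hpC
        · exact (hφ0mem e he).2
      · intro e he
        simp only [hφ]
        split
        · exact hpvne
        · next h =>
          intro hv
          exact hM_disj e he (s(p, v)) hpv h v (hv ▸ (hφ0mem e he).1)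
            (Sym2.mem_mk_right p v)
end

section
/- Let G be a finite simple graph, M a matching in G, C a vertex cover of G such that every vertex of C is saturated by M, and C' a vertex cover of G with |C'| ≥ |M| + 1. Then |C| ≤ 2·|C'| − 2; equivalently, (|C| : ℝ)/|C'| ≤ 2 − 2/|C'|. -/
open Finset

theorem Sym2.card_toFinset_le_two {α : Type*} [DecidableEq α] (z : Sym2 α) :
    #z.toFinset ≤ 2 := by
  rw [Sym2.card_toFinset]
  split_ifs <;> omega

theorem Finset.card_le_two_mul_card_of_forall_exists_mem_sym2 {α : Type*} {s : Finset α}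
    {M : Finset (Sym2 α)} (h : ∀ v ∈ s, ∃ e ∈ M, v ∈ e) : #s ≤ 2 * #M := by
  classical
  calc #s ≤ #(M.biUnion Sym2.toFinset) := card_le_card fun v hv => by
        obtain ⟨e, he, hve⟩ := h v hv
        exact mem_biUnion.2 ⟨e, he, Sym2.mem_toFinset.2 hve⟩
    _ ≤ #M * 2 := card_biUnion_le_card_mul _ _ _ fun e _ => e.card_toFinset_le_two
    _ = 2 * #M := mul_comm _ _

theorem Nat.cast_div_le_two_sub_two_div {a b : ℕ} (h : a + 2 ≤ 2 * b) :
    (a : ℝ) / b ≤ 2 - 2 / b := by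
  have hb : (0 : ℝ) < b := by exact_mod_cast (by omega : 0 < b)
  have h' : (a : ℝ) + 2 ≤ 2 * b := by exact_mod_cast h
  rw [div_le_iff₀ hb, sub_mul, div_mul_cancel₀ _ hb.ne']
  linarith

theorem matched_cover_ratio_bound_general {V : Type*}
    (M : Finset (Sym2 V)) (C C' : Finset V)
    (hCsat : ∀ v ∈ C, ∃ e ∈ M, v ∈ e)
    (hC'card : M.card + 1 ≤ C'.card) :
    C.card ≤ 2 * C'.card - 2 ∧ (C.card : ℝ) / C'.card ≤ 2 - 2 / C'.card := by
  have hCM : #C ≤ 2 * #M := card_le_two_mul_card_of_forall_exists_mem_sym2 hCsat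
  have key : #C + 2 ≤ 2 * #C' := by omega
  exact ⟨by omega, Nat.cast_div_le_two_sub_two_div key⟩

/-- If a vertex cover `C` uses only vertices saturated by the matching `M` and another
vertex cover `C'` satisfies `|C'| ≥ |M| + 1`, then `|C| ≤ 2|C'| - 2`, equivalently
`|C|/|C'| ≤ 2 - 2/|C'|`. -/
theorem matched_cover_ratio_bound {V : Type*} [Fintype V] (G : SimpleGraph V)
    (M : Finset (Sym2 V)) (C C' : Finset V)
    (hM_edges : ∀ e ∈ M, e ∈ G.edgeSet)
    (hM_disj : ∀ e ∈ M, ∀ f ∈ M, e ≠ f → ∀ v : V, v ∈ e → v ∉ f)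
    (hC : ∀ u v : V, G.Adj u v → u ∈ C ∨ v ∈ C)
    (hCsat : ∀ v ∈ C, ∃ e ∈ M, v ∈ e)
    (hC' : ∀ u v : V, G.Adj u v → u ∈ C' ∨ v ∈ C')
    (hC'card : M.card + 1 ≤ C'.card) :
    C.card ≤ 2 * C'.card - 2 ∧ (C.card : ℝ) / C'.card ≤ 2 - 2 / C'.card :=
  matched_cover_ratio_bound_general M C C' hCsat hC'card
end

section
/- Let k ≥ 1 and let G be the simple graph on the 2k + 1 vertices a_1, b_1, …, a_k, b_k, v whose edges are {a_i, b_i} for 1 ≤ i ≤ k together with {v, a_i} and {v, b_i} for 1 ≤ i ≤ k. Then (a) the minimum size of a vertex cover of G is k + 1, and (b) every vertex cover of G that does not contain v has size at least 2k. -/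
def apexTriangles (k : ℕ) : SimpleGraph (Option (Fin k × Bool)) :=
  SimpleGraph.fromRel (fun u w =>
    (∃ i : Fin k, u = some (i, false) ∧ w = some (i, true)) ∨ (u = none ∧ w ≠ none))

/-!
A cover must contain, for every triangle `v a_i b_i`, one of `a_i, b_i`; if it also contains
`v` this gives `k + 1` vertices, and `v` together with all the `a_i` is such a cover. If it
omits `v`, it must contain every neighbour of `v`, that is all `2k` other vertices.
-/

open Finset

theorem SimpleGraph.IsVertexCover.neighborSet_subset {V : Type*} {G : SimpleGraph V}
    {c : Set V} (hc : G.IsVertexCover c) {v : V} (hv : v ∉ c) : G.neighborSet v ⊆ c :=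
  fun _ hw => (hc hw).resolve_left hv

namespace apexTriangles

variable {k : ℕ}

theorem adj_none_some (p : Fin k × Bool) : (apexTriangles k).Adj none (some p) := by
  simp [apexTriangles]

theorem adj_pair (i : Fin k) : (apexTriangles k).Adj (some (i, false)) (some (i, true)) := by
  simp [apexTriangles]

theorem isVertexCover_iff {c : Set (Option (Fin k × Bool))} :
    (apexTriangles k).IsVertexCover c ↔
      (none ∈ c ∨ Set.range some ⊆ c) ∧ ∀ i, some (i, false) ∈ c ∨ some (i, true) ∈ c := by
  refine ⟨fun hc => ⟨?_, fun i => hc (adj_pair i)⟩, ?_⟩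
  · refine or_iff_not_imp_left.mpr fun hv => ?_
    rintro _ ⟨p, rfl⟩
    exact hc.neighborSet_subset hv (adj_none_some p)
  · rintro ⟨hv, hpair⟩ u w huw
    simp only [apexTriangles, SimpleGraph.fromRel_adj] at huw
    obtain ⟨-, (⟨i, rfl, rfl⟩ | ⟨rfl, hw⟩) | (⟨i, rfl, rfl⟩ | ⟨rfl, hu⟩)⟩ := huw
    · exact hpair i
    · obtain ⟨p, rfl⟩ := Option.ne_none_iff_exists'.mp hw
      exact hv.imp id fun h => h ⟨p, rfl⟩
    · exact (hpair i).symm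
    · obtain ⟨p, rfl⟩ := Option.ne_none_iff_exists'.mp hu
      exact (hv.imp id fun h => h ⟨p, rfl⟩).symm

theorem exists_isVertexCover_card_eq :
    ∃ C : Finset (Option (Fin k × Bool)),
      (apexTriangles k).IsVertexCover C ∧ #C = k + 1 := by
  have hinj : Function.Injective (Option.map fun i : Fin k => (i, false)) :=
    Option.map_injective fun _ _ h => congrArg Prod.fst h
  refine ⟨univ.image (Option.map fun i => (i, false)), isVertexCover_iff.mpr ⟨?_, fun i => ?_⟩, ?_⟩
  · exact .inl (mem_image.mpr ⟨none, mem_univ _, rfl⟩)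
  · exact .inl (mem_image.mpr ⟨some i, mem_univ _, rfl⟩)
  · simp [card_image_of_injective _ hinj]

variable {C : Finset (Option (Fin k × Bool))}

theorem two_mul_le_card (hC : (apexTriangles k).IsVertexCover C) (hv : none ∉ C) :
    2 * k ≤ #C :=
  calc 2 * k = #(univ : Finset (Fin k × Bool)) := by simp [mul_comm]
    _ ≤ #C := card_le_card_of_injOn some
      (fun p _ => hC.neighborSet_subset hv (adj_none_some p)) (Option.some_injective _).injOn

/-- Projecting `a_i, b_i ↦ i` maps a cover containing `v` onto `Option (Fin k)`. -/
theorem succ_le_card (hC : (apexTriangles k).IsVertexCover C) (hv : none ∈ C) :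
    k + 1 ≤ #C := by
  calc k + 1 = #(univ : Finset (Option (Fin k))) := by simp
    _ ≤ #C := card_le_card_of_surjOn (Option.map Prod.fst) ?_
  rintro (_ | i) -
  · exact ⟨none, hv, rfl⟩
  · obtain ⟨b, hb⟩ : ∃ b, some (i, b) ∈ C :=
      ((isVertexCover_iff.mp hC).2 i).elim (⟨_, ·⟩) (⟨_, ·⟩)
    exact ⟨_, hb, rfl⟩

end apexTriangles

/-- For the apex-of-triangles graph: (a) the minimum vertex cover has size `k + 1`,
and (b) every vertex cover avoiding the apex `v` has size at least `2k`. -/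
theorem apexTriangles_cover_bounds (k : ℕ) (hk : 1 ≤ k) :
    (∃ C : Finset (Option (Fin k × Bool)),
      (∀ u w, (apexTriangles k).Adj u w → u ∈ C ∨ w ∈ C) ∧ C.card = k + 1) ∧
    (∀ C : Finset (Option (Fin k × Bool)),
      (∀ u w, (apexTriangles k).Adj u w → u ∈ C ∨ w ∈ C) → k + 1 ≤ C.card) ∧
    (∀ C : Finset (Option (Fin k × Bool)),
      (∀ u w, (apexTriangles k).Adj u w → u ∈ C ∨ w ∈ C) → none ∉ C → 2 * k ≤ C.card) := by
  refine ⟨?_, fun C hC => ?_, fun C hC => apexTriangles.two_mul_le_card fun _ _ => hC _ _⟩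
  · obtain ⟨C, hC, hcard⟩ := apexTriangles.exists_isVertexCover_card_eq (k := k)
    exact ⟨C, fun _ _ h => hC h, hcard⟩
  · by_cases hv : none ∈ C
    · exact apexTriangles.succ_le_card (fun _ _ => hC _ _) hv
    · have := apexTriangles.two_mul_le_card (fun _ _ => hC _ _) hv
      omega
end

section
/- Let G be a finite simple graph, M a matching in G, and L ≥ 0 an integer. Suppose that every M-augmenting path in G has more than 2L + 1 edges (equivalently, at least 2L + 3 edges). Then every matching M' of G satisfies (L + 1)·|M'| ≤ (L + 2)·|M|. -/
/-!
Let `A = M' \ M` and `B = M \ M'`. From a vertex that `M` leaves unsaturated but `A` covers,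
follow a maximal path alternating between `A`-edges and `B`-edges. It is a whole component of
`A ∪ B`, so exchanging its `A`-edges for its `B`-edges in `M'` gives a matching with a smaller
`A`. The path has as many `A`-edges as `B`-edges, or it is `M`-augmenting, with `m + 1` edges in
`A` and `m ≥ L + 1` in `B`; either way `L + 1` times the first count is at most `L + 2` times the
second, and induction gives `(L + 1) |A| ≤ (L + 2) |B|`. When there is no such starting vertex,
every vertex covered by `A` is covered by `B`, so `|A| ≤ |B|`.
-/

open Finset

namespace MatchingRatio

variable {V : Type*} {G : SimpleGraph V}

structure IsMatching (G : SimpleGraph V) (M : Finset (Sym2 V)) : Prop where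
  subset_edgeSet : ∀ e ∈ M, e ∈ G.edgeSet
  disjoint : ∀ e ∈ M, ∀ f ∈ M, e ≠ f → ∀ v : V, v ∈ e → v ∉ f

structure IsAugmentingPath (G : SimpleGraph V) (M : Finset (Sym2 V)) (n : ℕ) (f : ℕ → V) :
    Prop where
  odd : n % 2 = 1
  injective : ∀ i j, i ≤ n → j ≤ n → f i = f j → i = j
  adj : ∀ i, i < n → G.Adj (f i) (f (i + 1))
  head_unsat : ∀ e ∈ M, f 0 ∉ e
  last_unsat : ∀ e ∈ M, f n ∉ e
  alternating : ∀ i, i < n → (s(f i, f (i + 1)) ∈ M ↔ i % 2 = 1)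

namespace IsMatching

variable {M N : Finset (Sym2 V)}

lemma eq_of_mem (hM : IsMatching G M) {e g : Sym2 V} (he : e ∈ M) (hg : g ∈ M) {v : V}
    (hve : v ∈ e) (hvg : v ∈ g) : e = g := by
  by_contra hne
  exact hM.disjoint e he g hg hne v hve hvg

lemma mono (hM : IsMatching G M) (hNM : N ⊆ M) : IsMatching G N :=
  ⟨fun e he => hM.subset_edgeSet e (hNM he), fun e he g hg => hM.disjoint e (hNM he) g (hNM hg)⟩

lemma union [DecidableEq V] (hM : IsMatching G M) (hN : IsMatching G N)
    (hMN : ∀ e ∈ M, ∀ g ∈ N, ∀ v ∈ e, v ∉ g) : IsMatching G (M ∪ N) where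
  subset_edgeSet e he := (mem_union.mp he).elim (hM.subset_edgeSet e) (hN.subset_edgeSet e)
  disjoint e he g hg hne v hve hvg := by
    rcases mem_union.mp he with he | he <;> rcases mem_union.mp hg with hg | hg
    exacts [hM.disjoint e he g hg hne v hve hvg, hMN e he g hg v hve hvg,
      hMN g hg e he v hvg hve, hN.disjoint e he g hg hne v hve hvg]

lemma card_biUnion_toFinset [DecidableEq V] (hM : IsMatching G M) :
    #(M.biUnion Sym2.toFinset) = 2 * #M := by
  rw [card_biUnion, sum_const_nat (m := 2), mul_comm]
  · exact fun e he => Sym2.card_toFinset_of_not_isDiag e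
      (G.not_isDiag_of_mem_edgeSet (hM.subset_edgeSet e he))
  · intro e he g hg hne
    exact disjoint_left.mpr fun v hve hvg =>
      hM.disjoint e he g hg hne v (Sym2.mem_toFinset.mp hve) (Sym2.mem_toFinset.mp hvg)

lemma card_le_card_of_forall_exists_mem (hM : IsMatching G M) (hN : IsMatching G N)
    (hMN : ∀ e ∈ M, ∀ v ∈ e, ∃ g ∈ N, v ∈ g) : #M ≤ #N := by
  classical
  have hsub : M.biUnion Sym2.toFinset ⊆ N.biUnion Sym2.toFinset := by
    intro v hv
    simp only [mem_biUnion, Sym2.mem_toFinset] at hv ⊢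
    obtain ⟨e, he, hve⟩ := hv
    exact hMN e he v hve
  have := card_le_card hsub
  rw [hM.card_biUnion_toFinset, hN.card_biUnion_toFinset] at this
  omega

end IsMatching

def alt (A B : Finset (Sym2 V)) (i : ℕ) : Finset (Sym2 V) := if i % 2 = 0 then A else B

variable {A B : Finset (Sym2 V)}

lemma alt_congr {i j : ℕ} (h : i % 2 = j % 2) : alt A B i = alt A B j := by
  simp only [alt, h]

lemma alt_of_mod_two_eq_zero {i : ℕ} (h : i % 2 = 0) : alt A B i = A := if_pos h

lemma alt_of_mod_two_eq_one {i : ℕ} (h : i % 2 = 1) : alt A B i = B := if_neg (by omega)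

lemma IsMatching.alt (hA : IsMatching G A) (hB : IsMatching G B) (i : ℕ) :
    IsMatching G (alt A B i) := by
  unfold MatchingRatio.alt
  split_ifs
  exacts [hA, hB]

structure IsAltPath (A B : Finset (Sym2 V)) (n : ℕ) (f : ℕ → V) : Prop where
  injective : ∀ i j, i ≤ n → j ≤ n → f i = f j → i = j
  mem_alt : ∀ i < n, s(f i, f (i + 1)) ∈ alt A B i
  head_unsat : ∀ e ∈ B, f 0 ∉ e

namespace IsAltPath

variable {n : ℕ} {f : ℕ → V}

lemma lt_card [Fintype V] (hf : IsAltPath A B n f) : n < Fintype.card V := by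
  have := card_le_card_of_injOn f (t := univ) (s := range (n + 1)) (fun _ _ => mem_univ _)
    fun i hi j hj => hf.injective i j (by simp_all) (by simp_all)
  simpa using this

lemma edge_injective (hf : IsAltPath A B n f) {i j : ℕ} (hi : i < n) (hj : j < n)
    (h : s(f i, f (i + 1)) = s(f j, f (j + 1))) : i = j := by
  rcases Sym2.eq_iff.mp h with ⟨h, -⟩ | ⟨h₁, h₂⟩
  · exact hf.injective i j hi.le hj.le h
  · have := hf.injective i (j + 1) hi.le hj h₁
    have := hf.injective (i + 1) j hi hj.le h₂
    omega

lemma exists_edge_eq (hA : IsMatching G A) (hB : IsMatching G B) (hf : IsAltPath A B n f)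
    {p k : ℕ} {e : Sym2 V} (he : e ∈ alt A B p) (hk : k ≤ n) (hke : f k ∈ e)
    (hkn : k = n → n % 2 ≠ p % 2) : ∃ j < n, j % 2 = p % 2 ∧ e = s(f j, f (j + 1)) := by
  have hX := hA.alt hB p
  by_cases hkp : k % 2 = p % 2
  · have hk' : k < n := lt_of_le_of_ne hk fun h => hkn h (h ▸ hkp)
    refine ⟨k, hk', hkp, hX.eq_of_mem he ?_ hke (Sym2.mem_mk_left _ _)⟩
    exact alt_congr hkp ▸ hf.mem_alt k hk'
  · obtain _ | j := k
    · rw [alt_of_mod_two_eq_one (by omega)] at he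
      exact absurd hke (hf.head_unsat e he)
    · refine ⟨j, by omega, by omega, hX.eq_of_mem he ?_ hke (Sym2.mem_mk_right _ _)⟩
      exact alt_congr (show j % 2 = p % 2 by omega) ▸ hf.mem_alt j (by omega)

lemma snoc (hA : IsMatching G A) (hB : IsMatching G B) (hf : IsAltPath A B n f) {w : V}
    (hw : s(f n, w) ∈ alt A B n) : IsAltPath A B (n + 1) (Function.update f (n + 1) w) where
  injective := by
    have hfw : ∀ k ≤ n, f k ≠ w := by
      rintro k hk rfl
      rcases hk.lt_or_eq with hk | rfl
      · obtain ⟨j, hj, hjn, hj_eq⟩ :=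
          hf.exists_edge_eq hA hB hw hk.le (Sym2.mem_mk_right _ _) (by omega)
        rcases Sym2.mem_iff.mp (hj_eq ▸ Sym2.mem_mk_left (f n) (f k)) with h | h
        · have := hf.injective n j le_rfl hj.le h
          omega
        · have := hf.injective n (j + 1) le_rfl hj h
          omega
      · exact G.loopless.irrefl _ ((hA.alt hB k).subset_edgeSet _ hw)
    intro i j hi hj hij
    simp only [Function.update_apply] at hij
    split_ifs at hij
    · omega
    · exact absurd hij.symm (hfw j (by omega))
    · exact absurd hij (hfw i (by omega))
    · exact hf.injective i j (by omega) (by omega) hij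
  mem_alt i hi := by
    rcases Nat.lt_succ_iff_lt_or_eq.mp hi with hi | rfl
    · rw [Function.update_of_ne (by omega), Function.update_of_ne (by omega)]
      exact hf.mem_alt i hi
    · rwa [Function.update_of_ne (by omega), Function.update_self]
  head_unsat := by
    rw [Function.update_of_ne (by omega)]
    exact hf.head_unsat

end IsAltPath

lemma exists_maximal_isAltPath [Fintype V] (hA : IsMatching G A) (hB : IsMatching G B) {s : V}
    (hs : ∀ e ∈ B, s ∉ e) :
    ∃ n f, f 0 = s ∧ IsAltPath A B n f ∧ ∀ w, s(f n, w) ∉ alt A B n := by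
  classical
  let P : ℕ → Prop := fun n => ∃ f : ℕ → V, f 0 = s ∧ IsAltPath A B n f
  have hP0 : P 0 :=
    ⟨fun _ => s, rfl, fun i j hi hj _ => by omega, fun i hi => absurd hi i.not_lt_zero, hs⟩
  obtain ⟨f, hf0, hf⟩ := Nat.findGreatest_spec (P := P) (Nat.zero_le (Fintype.card V)) hP0
  refine ⟨_, f, hf0, hf, fun w hw => ?_⟩
  have hg := hf.snoc hA hB hw
  refine Nat.findGreatest_is_greatest (Nat.lt_succ_self _) hg.lt_card.le ⟨_, ?_, hg⟩
  rwa [Function.update_of_ne (by omega)]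

lemma card_filter_range_mod_two (n : ℕ) {p : ℕ} (hp : p < 2) :
    #((range n).filter (· % 2 = p)) = (n + 1 - p) / 2 := by
  induction n with
  | zero => simp only [range_zero, filter_empty, card_empty]; omega
  | succ n ih =>
    rw [range_add_one, filter_insert]
    split_ifs
    · rw [card_insert_of_notMem (by simp), ih]
      omega
    · rw [ih]
      omega

def pathEdges [DecidableEq V] (f : ℕ → V) (n p : ℕ) : Finset (Sym2 V) :=
  ((range n).filter (· % 2 = p)).image fun j => s(f j, f (j + 1))

namespace IsAltPath

variable [DecidableEq V] {n : ℕ} {f : ℕ → V}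

lemma pathEdges_subset (hf : IsAltPath A B n f) (p : ℕ) : pathEdges f n p ⊆ alt A B p := by
  intro e he
  obtain ⟨j, hj, rfl⟩ := mem_image.mp he
  rw [mem_filter, mem_range] at hj
  exact alt_congr (show j % 2 = p % 2 by omega) ▸ hf.mem_alt j hj.1

lemma card_pathEdges (hf : IsAltPath A B n f) {p : ℕ} (hp : p < 2) :
    #(pathEdges f n p) = (n + 1 - p) / 2 := by
  rw [pathEdges, card_image_of_injOn, card_filter_range_mod_two n hp]
  intro i hi j hj h
  simp only [coe_filter, mem_range, Set.mem_ofPred_eq] at hi hj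
  exact hf.edge_injective hi.1 hj.1 h

lemma mul_card_pathEdges_le (hf : IsAltPath A B n f) {L : ℕ}
    (hlong : n % 2 = 1 → 2 * L + 1 < n) :
    (L + 1) * #(pathEdges f n 0) ≤ (L + 2) * #(pathEdges f n 1) := by
  rw [hf.card_pathEdges (by norm_num), hf.card_pathEdges (by norm_num)]
  rcases Nat.mod_two_eq_zero_or_one n with h | h
  · rw [show (n + 1 - 0) / 2 = (n + 1 - 1) / 2 by omega]
    exact Nat.mul_le_mul_right _ (by omega)
  · rw [show (n + 1 - 0) / 2 = n / 2 + 1 by omega, show n + 1 - 1 = n by omega]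
    nlinarith [show L + 1 ≤ n / 2 by omega]

/-- A maximal alternating path is a whole component of `A ∪ B`. -/
lemma mem_pathEdges (hA : IsMatching G A) (hB : IsMatching G B) (hf : IsAltPath A B n f)
    (hmax : ∀ w, s(f n, w) ∉ alt A B n) {p k : ℕ} (hp : p < 2) {e : Sym2 V}
    (he : e ∈ alt A B p) (hk : k ≤ n) (hke : f k ∈ e) : e ∈ pathEdges f n p := by
  obtain ⟨j, hj, hjp, rfl⟩ := hf.exists_edge_eq hA hB he hk hke <| by
    rintro rfl hnp
    obtain ⟨w, rfl⟩ := Sym2.mem_iff_exists.mp hke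
    exact hmax w (alt_congr hnp ▸ he)
  exact mem_image.mpr ⟨j, mem_filter.mpr ⟨mem_range.mpr hj, by omega⟩, rfl⟩

variable {M M' : Finset (Sym2 V)}

lemma isAugmentingPath (hM : IsMatching G M) (hM' : IsMatching G M')
    (hf : IsAltPath (M' \ M) (M \ M') n f) (hmax : ∀ w, s(f n, w) ∉ alt (M' \ M) (M \ M') n)
    (h0 : ∀ e ∈ M, f 0 ∉ e) (hn : n % 2 = 1) : IsAugmentingPath G M n f where
  odd := hn
  injective := hf.injective
  adj i hi := ((hM'.mono sdiff_subset).alt (hM.mono sdiff_subset) i).subset_edgeSet _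
    (hf.mem_alt i hi)
  head_unsat := h0
  last_unsat e he hne := by
    obtain ⟨w, rfl⟩ := Sym2.mem_iff_exists.mp hne
    by_cases heM' : s(f n, w) ∈ M'
    · have hlast := hf.mem_alt (n - 1) (by omega)
      rw [alt_of_mod_two_eq_zero (by omega), show n - 1 + 1 = n by omega] at hlast
      have := hM'.eq_of_mem heM' (mem_sdiff.mp hlast).1 (Sym2.mem_mk_left _ _)
        (Sym2.mem_mk_right _ _)
      exact (mem_sdiff.mp hlast).2 (this ▸ he)
    · exact hmax w (by rw [alt_of_mod_two_eq_one hn]; exact mem_sdiff.mpr ⟨he, heM'⟩)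
  alternating i hi := by
    have hmem := hf.mem_alt i hi
    rcases Nat.mod_two_eq_zero_or_one i with h | h
    · rw [alt_of_mod_two_eq_zero h] at hmem
      simp [(mem_sdiff.mp hmem).2, h]
    · rw [alt_of_mod_two_eq_one h] at hmem
      simp [(mem_sdiff.mp hmem).1, h]

lemma isMatching_swap (hM : IsMatching G M) (hM' : IsMatching G M')
    (hf : IsAltPath (M' \ M) (M \ M') n f) (hmax : ∀ w, s(f n, w) ∉ alt (M' \ M) (M \ M') n) :
    IsMatching G (M' \ pathEdges f n 0 ∪ pathEdges f n 1) := by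
  have hA : IsMatching G (M' \ M) := hM'.mono sdiff_subset
  have hB : IsMatching G (M \ M') := hM.mono sdiff_subset
  have hE₁ : pathEdges f n 1 ⊆ M \ M' := hf.pathEdges_subset 1
  refine (hM'.mono sdiff_subset).union (hB.mono hE₁) ?_
  rintro e he g hg v hve hvg
  obtain ⟨heM', heE₀⟩ := mem_sdiff.mp he
  by_cases heM : e ∈ M
  · have := hM.eq_of_mem heM (mem_sdiff.mp (hE₁ hg)).1 hve hvg
    exact (mem_sdiff.mp (hE₁ hg)).2 (this ▸ heM')
  · obtain ⟨j, hj, rfl⟩ := mem_image.mp hg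
    have hjn := mem_range.mp (mem_filter.mp hj).1
    obtain ⟨k, hk, rfl⟩ : ∃ k ≤ n, v = f k := by
      rcases Sym2.mem_iff.mp hvg with rfl | rfl
      exacts [⟨j, hjn.le, rfl⟩, ⟨j + 1, hjn, rfl⟩]
    exact heE₀ (hf.mem_pathEdges hA hB hmax (p := 0) (by norm_num) (mem_sdiff.mpr ⟨heM', heM⟩)
      hk hve)

end IsAltPath

lemma sdiff_swap_sdiff [DecidableEq V] {M M' E₀ E₁ : Finset (Sym2 V)} (hE₀ : E₀ ⊆ M' \ M)
    (hE₁ : E₁ ⊆ M \ M') : (M' \ E₀ ∪ E₁) \ M = (M' \ M) \ E₀ := by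
  ext e
  have := @hE₀ e
  have := @hE₁ e
  simp only [mem_sdiff, mem_union] at *
  tauto

lemma sdiff_sdiff_swap [DecidableEq V] {M M' E₀ E₁ : Finset (Sym2 V)} (hE₀ : E₀ ⊆ M' \ M)
    (hE₁ : E₁ ⊆ M \ M') : M \ (M' \ E₀ ∪ E₁) = (M \ M') \ E₁ := by
  ext e
  have := @hE₀ e
  have := @hE₁ e
  simp only [mem_sdiff, mem_union] at *
  tauto

lemma card_sdiff_le_card_sdiff [DecidableEq V] {M M' : Finset (Sym2 V)} (hM : IsMatching G M)
    (hM' : IsMatching G M') (hs : ∀ v, (∀ e ∈ M, v ∉ e) → ∀ e ∈ M' \ M, v ∉ e) :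
    #(M' \ M) ≤ #(M \ M') := by
  refine (hM'.mono sdiff_subset).card_le_card_of_forall_exists_mem (hM.mono sdiff_subset) ?_
  intro e he v hve
  obtain ⟨heM', heM⟩ := mem_sdiff.mp he
  obtain ⟨g, hg, hvg⟩ : ∃ g ∈ M, v ∈ g := by
    by_contra! h
    exact hs v h e he hve
  refine ⟨g, mem_sdiff.mpr ⟨hg, fun hgM' => heM ?_⟩, hvg⟩
  exact hM'.eq_of_mem heM' hgM' hve hvg ▸ hg

theorem mul_card_sdiff_le [Fintype V] [DecidableEq V] {M : Finset (Sym2 V)} (L : ℕ)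
    (hM : IsMatching G M) (haug : ∀ n f, IsAugmentingPath G M n f → 2 * L + 1 < n)
    {M' : Finset (Sym2 V)} (hM' : IsMatching G M') :
    (L + 1) * #(M' \ M) ≤ (L + 2) * #(M \ M') := by
  induction hk : #(M' \ M) using Nat.strong_induction_on generalizing M' with
  | _ k ih =>
  subst hk
  by_cases hs : ∃ s, (∀ e ∈ M, s ∉ e) ∧ ∃ e ∈ M' \ M, s ∈ e
  · obtain ⟨s, hsM, e₀, he₀, hse₀⟩ := hs
    obtain ⟨n, f, rfl, hf, hmax⟩ := exists_maximal_isAltPath (hM'.mono sdiff_subset)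
      (hM.mono sdiff_subset) fun e he => hsM e (mem_sdiff.mp he).1
    have hn : 0 < n := by
      obtain ⟨w, rfl⟩ := Sym2.mem_iff_exists.mp hse₀
      exact Nat.pos_of_ne_zero fun h => hmax w (by subst h; exact he₀)
    have hE₀ : pathEdges f n 0 ⊆ M' \ M := hf.pathEdges_subset 0
    have hE₁ : pathEdges f n 1 ⊆ M \ M' := hf.pathEdges_subset 1
    have hpath := hf.mul_card_pathEdges_le fun hodd =>
      haug n f (hf.isAugmentingPath hM hM' hmax hsM hodd)
    have hcard₀ := card_sdiff_add_card_eq_card hE₀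
    have hcard₁ := card_sdiff_add_card_eq_card hE₁
    have hE₀_pos : 0 < #(pathEdges f n 0) :=
      card_pos.mpr ⟨_, mem_image_of_mem _ (mem_filter.mpr ⟨mem_range.mpr hn, rfl⟩)⟩
    have hrec := ih _ (by rw [sdiff_swap_sdiff hE₀ hE₁]; omega)
      (hf.isMatching_swap hM hM' hmax) rfl
    rw [sdiff_swap_sdiff hE₀ hE₁, sdiff_sdiff_swap hE₀ hE₁] at hrec
    rw [← hcard₀, ← hcard₁, mul_add, mul_add]
    exact add_le_add hrec hpath
  · push Not at hs
    exact Nat.mul_le_mul (by omega) (card_sdiff_le_card_sdiff hM hM' hs)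

end MatchingRatio

/-- If every `M`-augmenting path of the graph `G` has more than `2L + 1` edges, then
every matching `M'` satisfies `(L + 1) |M'| ≤ (L + 2) |M|`.  An `M`-augmenting path
with `n` edges is encoded by its sequence of (distinct) vertices `f 0, …, f n`:
`n` is odd, consecutive vertices are adjacent, the two endpoints are unsaturated
by `M`, and the edges alternate out of / in `M`. -/
theorem matching_ratio_of_no_short_augmenting_path {V : Type*} [Fintype V]
    (G : SimpleGraph V) (M : Finset (Sym2 V)) (L : ℕ)
    (hM_edges : ∀ e ∈ M, e ∈ G.edgeSet)
    (hM_disj : ∀ e ∈ M, ∀ f ∈ M, e ≠ f → ∀ v : V, v ∈ e → v ∉ f)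
    (haug : ∀ (n : ℕ) (f : ℕ → V),
      n % 2 = 1 →
      (∀ i j, i ≤ n → j ≤ n → f i = f j → i = j) →
      (∀ i, i < n → G.Adj (f i) (f (i + 1))) →
      (∀ e ∈ M, f 0 ∉ e) → (∀ e ∈ M, f n ∉ e) →
      (∀ i, i < n → (s(f i, f (i + 1)) ∈ M ↔ i % 2 = 1)) →
      2 * L + 1 < n)
    (M' : Finset (Sym2 V))
    (hM'_edges : ∀ e ∈ M', e ∈ G.edgeSet)
    (hM'_disj : ∀ e ∈ M', ∀ f ∈ M', e ≠ f → ∀ v : V, v ∈ e → v ∉ f) :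
    (L + 1) * M'.card ≤ (L + 2) * M.card := by
  classical
  have key := MatchingRatio.mul_card_sdiff_le L ⟨hM_edges, hM_disj⟩
    (fun n f h => haug n f h.odd h.injective h.adj h.head_unsat h.last_unsat h.alternating)
    (M' := M') ⟨hM'_edges, hM'_disj⟩
  rw [← card_sdiff_add_card_inter M' M, ← card_sdiff_add_card_inter M M', inter_comm M M']
  nlinarith
end
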